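/- Let C be a category with all limits and finite colimits, such that cofiltered limits commute with finite colimits in C, and let X be a profinite space. Then the category CoSh(X,C) of cosheaves over X valued in C is a full subcategory of the precosheaf category PCoSh(X,C) = Fun(O_c(X),C) closed under all colimits and under cofiltered limits; that is, a colimit or cofiltered limit of cosheaves, computed objectwise in the functor category, is again a cosheaf. -/

import Mathlib

open CategoryTheory CategoryTheory.Limits TopologicalSpace

attribute [local instance] CategoryTheory.ConcreteCategory.instFunLike

universe w' w v u v₂ u₂ v₁ u₁

namespace ProfiniteCosheaves

variable {C : Type u₂} [Category.{v₂} C]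

/-- The canonical binary cofan `A(U) → A(U ⊔ V) ← A(V)` of a precosheaf `A` at a pair of
clopen subsets. -/
def cosheafCofan {X : Type*} [TopologicalSpace X] (A : Clopens X ⥤ C) (U V : Clopens X) :
    BinaryCofan (A.obj U) (A.obj V) :=
  BinaryCofan.mk (A.map (homOfLE le_sup_left : U ⟶ U ⊔ V)) (A.map (homOfLE le_sup_right))

/-- A precosheaf (a functor on the poset of clopen subsets) is a cosheaf if its value at `∅`
is initial and, for disjoint clopens `U, V`, the canonical cofan exhibits `A(U ⊔ V)` as the
coproduct `A(U) ⨿ A(V)`. -/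
structure IsCosheaf {X : Type*} [TopologicalSpace X] (A : Clopens X ⥤ C) : Prop where
  initial : Nonempty (IsInitial (A.obj ⊥))
  binary : ∀ U V : Clopens X, Disjoint U V → Nonempty (IsColimit (cosheafCofan A U V))

/-- The category `CoSh(X, C)` of cosheaves over a profinite space `X` valued in `C`. -/
def CoSheaf (X : Profinite.{u}) (C : Type u₂) [Category.{v₂} C] :=
  ObjectProperty.FullSubcategory (fun A : Clopens X ⥤ C => IsCosheaf A)

instance (X : Profinite.{u}) : Category (CoSheaf X C) := ObjectProperty.FullSubcategory.category _

/-- Preimage of clopen subsets along a continuous map, as a functor. -/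
def clopensComap {X Y : Profinite.{u}} (f : X ⟶ Y) : Clopens Y ⥤ Clopens X where
  obj U := ⟨f ⁻¹' (U : Set Y), U.isClopen.preimage f.hom.hom.continuous⟩
  map {U V} h := homOfLE (fun x hx => leOfHom h hx)

theorem IsCosheaf.comap {X Y : Profinite.{u}} (f : X ⟶ Y) {A : Clopens X ⥤ C}
    (hA : IsCosheaf A) : IsCosheaf (clopensComap f ⋙ A) := by
  constructor
  · have e : (clopensComap f).obj ⊥ = ⊥ := by
      apply SetLike.ext'
      simp [clopensComap]
    exact ⟨hA.initial.some.ofIso (A.mapIso (eqToIso e.symm))⟩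
  · intro U V hUV
    have hUV' : Disjoint ((clopensComap f).obj U) ((clopensComap f).obj V) := by
      rw [disjoint_iff] at hUV ⊢
      have h0 : (U : Set (Y : Type u)) ∩ (V : Set (Y : Type u)) = ∅ := by
        have := congrArg (fun W : Clopens (Y : Type u) => (W : Set (Y : Type u))) hUV
        simpa using this
      apply SetLike.ext'
      exact Set.preimage_inter.symm.trans ((congrArg _ h0).trans Set.preimage_empty)
    obtain ⟨h⟩ := hA.binary _ _ hUV'
    have e : (clopensComap f).obj U ⊔ (clopensComap f).obj V = (clopensComap f).obj (U ⊔ V) := by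
      apply SetLike.ext'
      exact Set.preimage_union.symm
    refine ⟨h.ofIsoColimit (Cocones.ext (A.mapIso (eqToIso e)) ?_)⟩
    rintro ⟨⟨⟩⟩ <;>
      · dsimp [cosheafCofan]
        exact (A.map_comp _ _).symm.trans (congrArg _ (Subsingleton.elim _ _))

/-- The direct image functor `f_* : CoSh(X, C) ⥤ CoSh(Y, C)`, `A ↦ A ∘ f⁻¹`. -/
def coshMapFun {X Y : Profinite.{u}} (f : X ⟶ Y) : CoSheaf X C ⥤ CoSheaf Y C :=
  ObjectProperty.lift _
    (ObjectProperty.ι _ ⋙ (Functor.whiskeringLeft (Clopens Y) (Clopens X) C).obj (clopensComap f))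
    (fun A => A.property.comap f)

/-- The functor `Profinite ⥤ Cat` sending `X` to the category of cosheaves on `X` valued in `C`,
and a continuous map to the direct image functor. -/
def coshFunctor (C : Type u₂) [Category.{v₂} C] : Profinite.{u} ⥤ Cat where
  obj X := Cat.of (CoSheaf X C)
  map f := (coshMapFun f).toCatHom
  map_id _ := rfl
  map_comp _ _ := rfl

/-- The total category `CoSh(C)` of profinite cosheaves valued in `C`, i.e. the Grothendieck
construction of `X ↦ CoSh(X, C)`. Objects are pairs `(X, A)` with `A` a cosheaf on `X`;
a morphism `(X, A) ⟶ (Y, B)` is a pair `(f, φ)` with `f : X ⟶ Y` continuous and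
`φ : A ∘ f⁻¹ ⟶ B`. -/
def CoSh (C : Type u₂) [Category.{v₂} C] :=
  Grothendieck (coshFunctor.{u} C)

instance : Category (CoSh.{u} C) := inferInstanceAs (Category (Grothendieck _))

/-- The global cosections functor `CoSh(C) ⥤ C`, `(A, X) ↦ A(X)`. -/
def globalCosections (C : Type u₂) [Category.{v₂} C] : CoSh.{u} C ⥤ C where
  obj P := P.fiber.obj.obj ⊤
  map {P Q} g :=
    P.fiber.obj.map (homOfLE (fun x _ => Set.mem_univ _) : (⊤ : Clopens P.base) ⟶ _) ≫
      NatTrans.app g.fiber.hom ⊤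
  map_id := by
    intro X
    have hX : X.fiber.obj.map (homOfLE (fun x _ => Set.mem_univ _) : (⊤ : Clopens X.base) ⟶ ⊤) =
        𝟙 _ := (congrArg X.fiber.obj.map (Subsingleton.elim _ _)).trans (X.fiber.obj.map_id ⊤)
    exact (congrArg (· ≫ _) hX).trans (Category.id_comp _)
  map_comp := by
    intro P Q R f g
    have hP : P.fiber.obj.map (homOfLE (fun x _ => Set.mem_univ _) : (⊤ : Clopens P.base) ⟶ ⊤) =
        𝟙 _ := (congrArg P.fiber.obj.map (Subsingleton.elim _ _)).trans (P.fiber.obj.map_id ⊤)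
    have hQ : Q.fiber.obj.map (homOfLE (fun x _ => Set.mem_univ _) : (⊤ : Clopens Q.base) ⟶ ⊤) =
        𝟙 _ := (congrArg Q.fiber.obj.map (Subsingleton.elim _ _)).trans (Q.fiber.obj.map_id ⊤)
    have key : (Grothendieck.comp f g).fiber.hom.app ⊤ = f.fiber.hom.app ⊤ ≫ g.fiber.hom.app ⊤ :=
      Category.id_comp _
    refine (congrArg (· ≫ _) hP).trans ((Category.id_comp _).trans (key.trans ?_))
    exact congrArg₂ (· ≫ ·) ((Category.id_comp _).symm.trans (congrArg (· ≫ _) hP.symm))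
      ((Category.id_comp _).symm.trans (congrArg (· ≫ _) hQ.symm))

/-- The poset of clopen neighbourhoods of a point, as a category. -/
def Nbhds (X : Profinite.{u}) (x : X) := ObjectProperty.FullSubcategory (fun U : Clopens X => x ∈ U)

instance (X : Profinite.{u}) (x : X) : Category (Nbhds X x) := ObjectProperty.FullSubcategory.category _

/-- The diagram of values of `A` on the clopen neighbourhoods of `x`; the costalk of `A` at `x`
is its (inverse) limit. -/
def costalkDiagram {X : Profinite.{u}} (A : Clopens X ⥤ C) (x : X) : Nbhds X x ⥤ C :=
  ObjectProperty.ι _ ⋙ A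

/-- The costalk `A_x = lim_{V ∋ x} A(V)` of a precosheaf at a point. -/
noncomputable def costalk {X : Profinite.{u}} (A : Clopens X ⥤ C) (x : X)
    [HasLimit (costalkDiagram A x)] : C :=
  limit (costalkDiagram A x)

/-- `c` is *a* costalk of `A` at `x` if the costalk diagram of `A` at `x` admits a limit cone
whose point is isomorphic to `c`. -/
def IsCostalk {X : Profinite.{u}} (A : Clopens X ⥤ C) (x : X) (c : C) : Prop :=
  ∃ t : Cone (costalkDiagram A x), Nonempty (IsLimit t) ∧ Nonempty (t.pt ≅ c)

/-- The pro-completion of a category: the free completion under cofiltered limits, realised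
concretely as the opposite of the category of left-exact functors to `Type`. -/
def ProCompletion (E : Type u₁) [Category.{v₁} E] :=
  (ObjectProperty.FullSubcategory fun F : E ⥤ Type v₁ => Nonempty (PreservesFiniteLimits F))ᵒᵖ

instance (E : Type u₁) [Category.{v₁} E] : Category (ProCompletion E) :=
  inferInstanceAs (Category (ObjectProperty.FullSubcategory _)ᵒᵖ)

/-- The canonical (co-Yoneda) embedding of a category into its pro-completion. -/
def proEmbedding (E : Type u₁) [Category.{v₁} E] : E ⥤ ProCompletion E where
  obj e := Opposite.op ⟨coyoneda.obj (Opposite.op e), ⟨inferInstance⟩⟩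
  map {e e'} f := Quiver.Hom.op
    (show (⟨coyoneda.obj (Opposite.op e'), ⟨inferInstance⟩⟩ : ObjectProperty.FullSubcategory _) ⟶
        ⟨coyoneda.obj (Opposite.op e), ⟨inferInstance⟩⟩ from ObjectProperty.homMk (coyoneda.map f.op))

/-- A regular category: it has finite limits, coequalisers of kernel pairs, and regular
epimorphisms are stable under pullback. -/
class IsRegularCategory (C : Type u₂) [Category.{v₂} C] : Prop where
  hasFiniteLimits : HasFiniteLimits C
  hasCoeqOfKernelPairs : ∀ {R X Y : C} (f : X ⟶ Y) (a b : R ⟶ X),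
    IsPullback a b f f → HasCoequalizer a b
  regularEpi_stable : ∀ {P X Y Z : C} (f : X ⟶ Z) (g : Y ⟶ Z) (p₁ : P ⟶ X) (p₂ : P ⟶ Y),
    IsPullback p₁ p₂ f g → Nonempty (RegularEpi f) → Nonempty (RegularEpi p₂)

/-- `D` is closed under subobjects in its pro-completion: any subobject (in `Pro(D)`) of an
object of `D` is isomorphic to an object of `D`. -/
def ClosedUnderSubobjects (D : Type u) [SmallCategory D] : Prop :=
  ∀ (d : D) (c : ProCompletion D) (m : c ⟶ (proEmbedding D).obj d), Mono m →
    ∃ d' : D, Nonempty (c ≅ (proEmbedding D).obj d')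

/-- The coprojection maps into binary coproducts are monomorphisms. -/
def MonoCoprojections (C : Type u₂) [Category.{v₂} C] : Prop :=
  ∀ (a b p : C) (inl : a ⟶ p) (inr : b ⟶ p),
    Nonempty (IsColimit (BinaryCofan.mk inl inr)) → Mono inl ∧ Mono inr

/-- Cofiltered limits commute with finite colimits in `C`: for every finite category `J`,
the colimit functor `(J ⥤ C) ⥤ C` preserves cofiltered limits (of shapes of size `w`). -/
def CofilteredLimitsCommuteWithFiniteColimits (C : Type u₂) [Category.{v₂} C]
    [HasFiniteColimits C] : Prop :=
  ∀ (J : Type) [SmallCategory J] [FinCategory J] (K : Type w) [SmallCategory K] [IsCofiltered K],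
    PreservesLimitsOfShape K (colim (J := J) (C := C))

/-- The full subcategory of "finite objects" of `CoSh(Pro(D))`: cosheaves `(A, X)` with `X`
finite such that every costalk of `A` lies in (the image of) `D`. -/
def CoShFinProp (D : Type u) [SmallCategory D] (P : CoSh.{u} (ProCompletion D)) : Prop :=
  Finite (P.base : Type u) ∧
    ∀ x : P.base, ∃ d : D, IsCostalk P.fiber.obj x ((proEmbedding D).obj d)

/-- The category `CoSh(Pro(D))_fin` of finite cosheaf objects. -/
def CoShFin (D : Type u) [SmallCategory D] := ObjectProperty.FullSubcategory (CoShFinProp D)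

instance (D : Type u) [SmallCategory D] : Category (CoShFin D) := ObjectProperty.FullSubcategory.category _

end ProfiniteCosheaves

/-!
Both cosheaf conditions say that `A` sends a particular colimit cocone `s` of clopens (the empty
cocone at `∅`, the binary cofan at `U ⊔ V` for disjoint `U, V`) to a colimit cocone, i.e. that the
comparison map `colim (K ⋙ A) ⟶ A s.pt` is an isomorphism. This map is natural in `A`, between
functors built from evaluations and a finite colimit. Colimits and limits of precosheaves are
computed pointwise, colimits commute with colimits, and cofiltered limits commute with finite
colimits by hypothesis; so a colimit or cofiltered limit of such isomorphisms is again one.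
-/

namespace ProfiniteCosheaves

section

variable {C : Type*} [Category C] {E : Type*} [Category E] {J : Type*} [Category J]

theorem isIso_app_of_isColimit {G H : E ⥤ C} (α : G ⟶ H) {F : J ⥤ E} {c : Cocone F}
    (hc : IsColimit c) [PreservesColimit F G] [PreservesColimit F H]
    [∀ j, IsIso (α.app (F.obj j))] : IsIso (α.app c.pt) := by
  have hG := isColimitOfPreserves G hc
  have hH := isColimitOfPreserves H hc
  let w : F ⋙ G ≅ F ⋙ H := NatIso.ofComponents (fun j => asIso (α.app (F.obj j)))
  have : α.app c.pt = (hG.coconePointsIsoOfNatIso hH w).hom :=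
    hG.hom_ext fun j => (α.naturality _).trans (hG.comp_coconePointsIsoOfNatIso_hom hH w j).symm
  rw [this]
  infer_instance

theorem isIso_app_of_isLimit {G H : E ⥤ C} (α : G ⟶ H) {F : J ⥤ E} {c : Cone F}
    (hc : IsLimit c) [PreservesLimit F G] [PreservesLimit F H]
    [∀ j, IsIso (α.app (F.obj j))] : IsIso (α.app c.pt) := by
  have hG := isLimitOfPreserves G hc
  have hH := isLimitOfPreserves H hc
  let w : F ⋙ G ≅ F ⋙ H := NatIso.ofComponents (fun j => asIso (α.app (F.obj j)))
  have : α.app c.pt = (hG.conePointsIsoOfNatIso hH w).hom :=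
    hH.hom_ext fun j => (α.naturality _).symm.trans (hG.conePointsIsoOfNatIso_hom_comp hH w j).symm
  rw [this]
  infer_instance

variable {D : Type*} [Category D] {I : Type*} [Category I] [HasColimitsOfShape I C]
  {K : I ⥤ D} (s : Cocone K)

noncomputable def colimitComparison :
    (Functor.whiskeringLeft I D C).obj K ⋙ colim ⟶ (evaluation D C).obj s.pt where
  app A := colimit.desc (K ⋙ A) (A.mapCocone s)
  naturality A B f := colimit.hom_ext fun i => by simp

theorem nonempty_isColimit_mapCocone_iff_isIso_colimitComparison (A : D ⥤ C) :
    Nonempty (IsColimit (A.mapCocone s)) ↔ IsIso ((colimitComparison s).app A) :=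
  (colimit.isColimit (K ⋙ A)).nonempty_isColimit_iff_isIso_desc

variable {s}

theorem nonempty_isColimit_mapCocone_of_isColimit {F : J ⥤ D ⥤ C}
    [∀ d, PreservesColimit F ((evaluation D C).obj d)]
    (hF : ∀ j, Nonempty (IsColimit ((F.obj j).mapCocone s))) {c : Cocone F} (hc : IsColimit c) :
    Nonempty (IsColimit (c.pt.mapCocone s)) := by
  simp only [nonempty_isColimit_mapCocone_iff_isIso_colimitComparison] at hF ⊢
  have : PreservesColimit F ((Functor.whiskeringLeft I D C).obj K) :=
    preservesColimit_of_evaluation _ _ fun i =>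
      inferInstanceAs (PreservesColimit F ((evaluation D C).obj (K.obj i)))
  exact isIso_app_of_isColimit _ hc

theorem nonempty_isColimit_mapCocone_of_isLimit
    [PreservesLimitsOfShape J (colim (J := I) (C := C))]
    {F : J ⥤ D ⥤ C} [∀ d, PreservesLimit F ((evaluation D C).obj d)]
    (hF : ∀ j, Nonempty (IsColimit ((F.obj j).mapCocone s))) {c : Cone F} (hc : IsLimit c) :
    Nonempty (IsColimit (c.pt.mapCocone s)) := by
  simp only [nonempty_isColimit_mapCocone_iff_isIso_colimitComparison] at hF ⊢
  have : PreservesLimit F ((Functor.whiskeringLeft I D C).obj K) :=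
    preservesLimit_of_evaluation _ _ fun i =>
      inferInstanceAs (PreservesLimit F ((evaluation D C).obj (K.obj i)))
  exact isIso_app_of_isLimit _ hc

end

def supCofan {X : Type*} [TopologicalSpace X] (U V : Clopens X) : BinaryCofan U V :=
  BinaryCofan.mk (homOfLE le_sup_left) (homOfLE le_sup_right)

theorem isCosheaf_iff {C : Type*} [Category C] {X : Type*} [TopologicalSpace X]
    (A : Clopens X ⥤ C) :
    IsCosheaf A ↔ Nonempty (IsColimit (A.mapCocone (asEmptyCocone ⊥))) ∧
      ∀ U V : Clopens X, Disjoint U V → Nonempty (IsColimit (A.mapCocone (supCofan U V))) := by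
  have hinitial : Nonempty (IsColimit (A.mapCocone (asEmptyCocone ⊥))) ↔
      Nonempty (IsInitial (A.obj ⊥)) :=
    (isColimitEquivIsInitialOfIsEmpty (c := A.mapCocone _)).nonempty_congr
  have hbinary (U V : Clopens X) : Nonempty (IsColimit (A.mapCocone (supCofan U V))) ↔
      Nonempty (IsColimit (cosheafCofan A U V)) :=
    (isColimitMapCoconeBinaryCofanEquiv A _ _).nonempty_congr
  simp only [hinitial, hbinary]
  exact ⟨fun h => ⟨h.initial, h.binary⟩, fun h => ⟨h.1, h.2⟩⟩

/-- **Statement 5.** If `C` has all limits and finite colimits, and cofiltered limits commute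
with finite colimits in `C`, then for a profinite space `X` the cosheaves form a full
subcategory of the precosheaf (functor) category closed under all colimits and under cofiltered
limits: an objectwise colimit, or objectwise cofiltered limit, of cosheaves is a cosheaf. -/
theorem isCosheaf_closed_under_colimits_and_cofiltered_limits (C : Type u₂) [Category.{u} C]
    [HasLimits C] [HasFiniteColimits C]
    (hcomm : CofilteredLimitsCommuteWithFiniteColimits.{u} C) (X : Profinite.{u}) :
    (∀ (J : Type u) [SmallCategory J] (F : J ⥤ (Clopens X ⥤ C))
        (_ : ∀ j, IsCosheaf (F.obj j)) (c : Cocone F), IsColimit c → IsCosheaf c.pt) ∧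
    (∀ (J : Type u) [SmallCategory J] [IsCofiltered J] (F : J ⥤ (Clopens X ⥤ C))
        (_ : ∀ j, IsCosheaf (F.obj j)) (t : Cone F), IsLimit t → IsCosheaf t.pt) := by
  constructor
  · intro J _ F hF c hc
    simp only [isCosheaf_iff] at hF ⊢
    exact ⟨nonempty_isColimit_mapCocone_of_isColimit (fun j => (hF j).1) hc,
      fun U V hUV => nonempty_isColimit_mapCocone_of_isColimit (fun j => (hF j).2 U V hUV) hc⟩
  · intro J _ _ F hF t ht
    have := hcomm (Discrete PEmpty) J
    have := hcomm (Discrete WalkingPair) J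
    simp only [isCosheaf_iff] at hF ⊢
    exact ⟨nonempty_isColimit_mapCocone_of_isLimit (fun j => (hF j).1) ht,
      fun U V hUV => nonempty_isColimit_mapCocone_of_isLimit (fun j => (hF j).2 U V hUV) ht⟩

end ProfiniteCosheaves
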